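/- Let n ≥ 1, m ≥ 2n, B ∈ ℝ^{n×n} be invertible, D ∈ ℝ^{n×n} be diagonal with strictly positive diagonal entries, and M ∈ ℝ^{(m−2n)×n} be arbitrary. Then the stacked matrix W = [B; −DB; M] ∈ ℝ^{m×n} has a directed spanning set of ℝ^n with respect to every x ∈ ℝ^n; in particular the map x ↦ ReLU(Wx) is injective. -/

import Mathlib

/- Each row `b` of `B` is accompanied in `W` by the row `-(d • b)` with `d > 0`, so for every `x`
one of the two has nonnegative inner product with `x`; both span the same line, hence the rows of
`W` that are nonnegative on `x` span the row space of `B`, which is all of `ℝ^n`.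
Injectivity then follows from the DSS property alone: if `ReLU(W x) = ReLU(W y)`, every row `w`
with `⟨w, x + y⟩ ≥ 0` satisfies `⟨w, x⟩ = ⟨w, y⟩`, and these rows span, so `x = y`. -/

/-- Componentwise ReLU applied to a vector (over an arbitrary finite index type). -/
noncomputable def relu {ι : Type*} (y : ι → ℝ) : ι → ℝ := fun j => max (y j) 0

open Matrix Submodule

theorem eq_of_max_zero_eq_of_nonneg_add {a b : ℝ} (h : max a 0 = max b 0) (hab : 0 ≤ a + b) :
    a = b := by
  rcases le_total a 0 with ha | ha <;> rcases le_total b 0 with hb | hb <;>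
    simp only [max_eq_left, max_eq_right, ha, hb] at h <;> linarith

theorem Submodule.span_eq_top_of_forall_exists_smul_mem {K V ι : Type*} [DivisionRing K]
    [AddCommGroup V] [Module K V] {v : ι → V} {s : Set V} (hv : span K (Set.range v) = ⊤)
    (h : ∀ i, ∃ c : K, c ≠ 0 ∧ c • v i ∈ s) : span K s = ⊤ := by
  rw [eq_top_iff, ← hv, span_le]
  rintro _ ⟨i, rfl⟩
  obtain ⟨c, hc, hcs⟩ := h i
  exact (smul_mem_iff _ hc).mp (subset_span hcs)

theorem Matrix.span_range_eq_top_of_isUnit {R κ : Type*} [CommRing R] [Fintype κ]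
    [DecidableEq κ] {B : Matrix κ κ R} (hB : IsUnit B) : span R (Set.range B) = ⊤ := by
  change span R (Set.range B.row) = ⊤
  rw [← range_vecMulLinear, LinearMap.range_eq_top]
  exact vecMul_surjective_iff_isUnit.mpr hB

section Rows

variable {ι κ : Type*} [Fintype κ]

theorem span_nonneg_rows_eq_top_of_neg_smul_rows {ι' : Type*} {W : Matrix ι κ ℝ}
    {v : ι' → κ → ℝ} (hv : span ℝ (Set.range v) = ⊤) {c : ι' → ℝ} (hc : ∀ i, 0 < c i)
    (hpos : ∀ i, ∃ j, W j = v i) (hneg : ∀ i, ∃ j, W j = -(c i • v i)) (x : κ → ℝ) :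
    span ℝ {w | ∃ j, 0 ≤ W j ⬝ᵥ x ∧ W j = w} = ⊤ := by
  refine span_eq_top_of_forall_exists_smul_mem hv fun i => ?_
  rcases le_or_gt 0 (v i ⬝ᵥ x) with hx | hx
  · obtain ⟨j, hj⟩ := hpos i
    exact ⟨1, one_ne_zero, j, hj ▸ hx, by rw [hj, one_smul]⟩
  · obtain ⟨j, hj⟩ := hneg i
    refine ⟨-c i, neg_ne_zero.mpr (hc i).ne', j, ?_, by rw [hj, neg_smul]⟩
    rw [hj, neg_dotProduct, smul_dotProduct, smul_eq_mul]
    nlinarith [hc i]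

theorem relu_mulVec_injective_of_span_nonneg_rows {W : Matrix ι κ ℝ}
    (hW : ∀ x, span ℝ {w | ∃ j, 0 ≤ W j ⬝ᵥ x ∧ W j = w} = ⊤) :
    Function.Injective fun x => relu (W *ᵥ x) := by
  intro x y hxy
  have hrows : span ℝ {w | ∃ j, 0 ≤ W j ⬝ᵥ (x + y) ∧ W j = w} ≤
      LinearMap.ker (dotProductBilin ℝ ℝ |>.flip (x - y)) := by
    rw [span_le]
    rintro _ ⟨j, hj, rfl⟩
    rw [dotProduct_add] at hj
    have hrelu : max (W j ⬝ᵥ x) 0 = max (W j ⬝ᵥ y) 0 := congrFun hxy j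
    simp [eq_of_max_zero_eq_of_nonneg_add hrelu hj]
  have hxy0 : (x - y) ⬝ᵥ (x - y) = 0 := by
    simpa using hrows (hW (x + y) ▸ mem_top : x - y ∈ _)
  exact sub_eq_zero.mp (dotProduct_self_eq_zero.mp hxy0)

end Rows

theorem stacked_matrix_has_dss_and_injective_general {n m : ℕ}
    (B : Matrix (Fin n) (Fin n) ℝ) (hB : IsUnit B)
    (d : Fin n → ℝ) (hd : ∀ i, 0 < d i)
    (M : Matrix (Fin (m - 2 * n)) (Fin n) ℝ) :
    let W : Matrix (Fin n ⊕ (Fin n ⊕ Fin (m - 2 * n))) (Fin n) ℝ :=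
      Matrix.fromRows B (Matrix.fromRows (-(Matrix.diagonal d * B)) M)
    (∀ x : Fin n → ℝ,
      Submodule.span ℝ
        {w : Fin n → ℝ | ∃ j, 0 ≤ dotProduct (W j) x ∧ W j = w} = ⊤) ∧
    Function.Injective (fun x : Fin n → ℝ => relu (W.mulVec x)) := by
  intro W
  have hdss : ∀ x, span ℝ {w | ∃ j, 0 ≤ W j ⬝ᵥ x ∧ W j = w} = ⊤ :=
    span_nonneg_rows_eq_top_of_neg_smul_rows (span_range_eq_top_of_isUnit hB) hd
      (fun i => ⟨Sum.inl i, rfl⟩)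
      (fun i => ⟨Sum.inr (Sum.inl i), funext fun k => by simp [W, diagonal_mul]⟩)
  exact ⟨hdss, relu_mulVec_injective_of_span_nonneg_rows hdss⟩

/-- **Construction of injective ReLU layers with `m ≥ 2n`**: stacking `B`, `-DB` and an
arbitrary matrix `M` gives a matrix having a DSS of `ℝ^n` with respect to every `x`, whose
ReLU layer is injective. -/
theorem stacked_matrix_has_dss_and_injective {n m : ℕ} (hn : 1 ≤ n) (hm : 2 * n ≤ m)
    (B : Matrix (Fin n) (Fin n) ℝ) (hB : IsUnit B)
    (d : Fin n → ℝ) (hd : ∀ i, 0 < d i)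
    (M : Matrix (Fin (m - 2 * n)) (Fin n) ℝ) :
    let W : Matrix (Fin n ⊕ (Fin n ⊕ Fin (m - 2 * n))) (Fin n) ℝ :=
      Matrix.fromRows B (Matrix.fromRows (-(Matrix.diagonal d * B)) M)
    (∀ x : Fin n → ℝ,
      Submodule.span ℝ
        {w : Fin n → ℝ | ∃ j, 0 ≤ dotProduct (W j) x ∧ W j = w} = ⊤) ∧
    Function.Injective (fun x : Fin n → ℝ => relu (W.mulVec x)) :=
  stacked_matrix_has_dss_and_injective_general B hB d hd M
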